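/- Let H be a vertex-transitive graph and fix a number d of colors for the distinguishing game on H. Then either every possible first move (every choice of a vertex together with one of the d colors) is a winning move for the first player, i.e., after making it the first player has a winning strategy for the remainder of the game, or every possible first move is losing for the first player. -/
import Mathlib


open SimpleGraph

/-- A coloring `c : V → Fin d` is `d`-distinguishing for `G` if the only automorphism of `G`
preserving the coloring is the identity. -/
def IsDistinguishing {V : Type} (G : SimpleGraph V) (d : ℕ) (c : V → Fin d) : Prop :=
  ∀ σ : G ≃g G, (∀ v, c (σ v) = c v) → ∀ v, σ v = v

/-- `GForces G d P b c`: starting from the partial coloring `c`, with Gentle to move when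
`b = true` and Rascal to move when `b = false`, Gentle has a strategy guaranteeing that the
final coloring (with `d` colors) satisfies `P`. -/
inductive GForces {V : Type} [DecidableEq V] (G : SimpleGraph V) (d : ℕ)
    (P : (V → Fin d) → Prop) : Bool → (V → Option (Fin d)) → Prop
  | gentleMove (c : V → Option (Fin d)) (v : V) (hv : c v = none) (k : Fin d)
      (h : GForces G d P false (Function.update c v (some k))) : GForces G d P true c
  | rascalMove (c : V → Option (Fin d)) (hne : ∃ v, c v = none)
      (h : ∀ v, c v = none → ∀ k : Fin d,
        GForces G d P true (Function.update c v (some k))) : GForces G d P false c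
  | finished (b : Bool) (f : V → Fin d) (hP : P f) : GForces G d P b (fun v => some (f v))

/-- The `G`-game distinguishing number: the least number `d` of colors such that Gentle,
playing first, has a winning strategy in the distinguishing game on `G`; `⊤` if none exists. -/
noncomputable def gameDistNumG {V : Type} [Fintype V] [DecidableEq V] (G : SimpleGraph V) : ℕ∞ :=
  sInf {e : ℕ∞ | ∃ d : ℕ, e = (d : ℕ∞) ∧
    GForces G d (IsDistinguishing G d) true (fun _ => none)}

/-- The `R`-game distinguishing number: the least number `d` of colors such that Gentle
has a winning strategy when Rascal plays first; `⊤` if none exists. -/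
noncomputable def gameDistNumR {V : Type} [Fintype V] [DecidableEq V] (G : SimpleGraph V) : ℕ∞ :=
  sInf {e : ℕ∞ | ∃ d : ℕ, e = (d : ℕ∞) ∧
    GForces G d (IsDistinguishing G d) false (fun _ => none)}

/-- The (classical) distinguishing number of a graph. -/
noncomputable def distNum {V : Type} (G : SimpleGraph V) : ℕ :=
  sInf {d : ℕ | ∃ c : V → Fin d, IsDistinguishing G d c}

/-- Two graphs are relatively prime w.r.t. the Cartesian product if no graph on more than one
vertex is a common Cartesian factor of both. -/
def RelPrime {V W : Type} (G : SimpleGraph V) (H : SimpleGraph W) : Prop :=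
  ¬ ∃ (γ δ ε : Type) (K : SimpleGraph γ) (A : SimpleGraph δ) (B : SimpleGraph ε),
      Nontrivial γ ∧ Nonempty (G ≃g K.boxProd A) ∧ Nonempty (H ≃g K.boxProd B)



lemma GForces.map {V : Type} [DecidableEq V] (G : SimpleGraph V) (d : ℕ)
    (P Q : (V → Fin d) → Prop) (σ : G ≃g G) (π : Fin d ≃ Fin d)
    (hPQ : ∀ f, P f → Q (fun v => π (f (σ.symm v)))) :
    ∀ b c, GForces G d P b c →
      GForces G d Q b (fun v => (c (σ.symm v)).map π) := by
  intro b c h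
  induction h with
  | gentleMove c v hv k _ ih =>
      refine GForces.gentleMove _ (σ v) ?_ (π k) ?_
      · simp [hv]
      · convert ih using 1
        funext w
        rcases eq_or_ne w (σ v) with rfl | hw
        · have hs : σ.symm (σ v) = v := σ.symm_apply_apply v
          rw [hs]
          simp
        · have hw' : σ.symm w ≠ v := fun h => hw (by
            have := congrArg σ h; simpa using this)
          simp [Function.update_of_ne hw, Function.update_of_ne hw']
  | rascalMove c hne _ ih =>
      obtain ⟨w, hw⟩ := hne
      refine GForces.rascalMove _ ⟨σ w, by simp [hw]⟩ ?_
      intro u hu k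
      have hu' : c (σ.symm u) = none := by
        simpa using hu
      have := ih (σ.symm u) hu' (π.symm k)
      convert this using 1
      funext w'
      rcases eq_or_ne w' u with rfl | hw'
      · simp
      · have hw'' : σ.symm w' ≠ σ.symm u := fun h => hw' (σ.symm.injective h)
        have hu2 : w' ≠ σ (σ.symm u) := by simpa using hw'
        simp [Function.update_of_ne hw', Function.update_of_ne hw'']
  | finished b f hP =>
      have : (fun v => ((fun v => some (f v)) (σ.symm v)).map π)
          = fun v => some ((fun v => π (f (σ.symm v))) v) := by
        funext v; simp
      rw [this]
      exact GForces.finished b _ (hPQ f hP)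

lemma isDistinguishing_map {V : Type} (G : SimpleGraph V) (d : ℕ)
    (σ : G ≃g G) (π : Fin d ≃ Fin d) (f : V → Fin d)
    (hf : IsDistinguishing G d f) :
    IsDistinguishing G d (fun v => π (f (σ.symm v))) := by
  intro τ hτ v
  have key : ∀ w, f ((σ.trans (τ.trans σ.symm)) w) = f w := by
    intro w
    have := hτ (σ w)
    simp only at this
    have h2 : π (f (σ.symm (τ (σ w)))) = π (f w) := by simpa using this
    exact π.injective h2
  have h3 := hf (σ.trans (τ.trans σ.symm)) key (σ.symm v)
  have h4 : σ.symm (τ (σ (σ.symm v))) = σ.symm v := h3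
  rw [σ.apply_symm_apply v] at h4
  exact σ.symm.injective h4

lemma opening_mono {V : Type} [Fintype V] [DecidableEq V] (H : SimpleGraph V)
    (htrans : ∀ u v : V, ∃ σ : H ≃g H, σ u = v) (d : ℕ)
    (b : Bool) (v v' : V) (k k' : Fin d)
    (h : GForces H d (IsDistinguishing H d) b
        (Function.update (fun _ => none) v (some k))) :
    GForces H d (IsDistinguishing H d) b
        (Function.update (fun _ => none) v' (some k')) := by
  obtain ⟨σ, hσ⟩ := htrans v v'
  set π := Equiv.swap k k' with hπ
  have := GForces.map H d (IsDistinguishing H d) (IsDistinguishing H d) σ π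
    (fun f hf => isDistinguishing_map H d σ π f hf) b _ h
  have hceq : (fun u => Option.map (⇑π)
      (Function.update (fun _ => none : V → Option (Fin d)) v (some k) (σ.symm u)))
      = Function.update (fun _ => none) v' (some k') := by
    funext u
    rcases eq_or_ne u v' with rfl | hu
    · have hsv : σ.symm u = v := by rw [← hσ]; exact σ.symm_apply_apply v
      rw [hsv]
      simp [hπ, Equiv.swap_apply_left]
    · have hu' : σ.symm u ≠ v := by
        intro hc
        apply hu
        rw [← hσ, ← hc]
        exact (σ.apply_symm_apply u).symm
      simp [Function.update_of_ne hu, Function.update_of_ne hu']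
  exact hceq ▸ this

/-- On a vertex-transitive graph, in the distinguishing game with `d` colors, either every
first move (a vertex together with a color) is winning for the first player, or every first
move is losing: any two opening moves lead to positions with the same winner, whichever
player moved first (`b` records whose turn it is after the opening move). -/
theorem stmt_6 {V : Type} [Fintype V] [DecidableEq V] (H : SimpleGraph V)
    (htrans : ∀ u v : V, ∃ σ : H ≃g H, σ u = v) (d : ℕ) :
    ∀ (b : Bool) (v v' : V) (k k' : Fin d),
      GForces H d (IsDistinguishing H d) b
        (Function.update (fun _ => none) v (some k)) ↔
      GForces H d (IsDistinguishing H d) b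
        (Function.update (fun _ => none) v' (some k')) := by
  intro b v v' k k'
  exact ⟨opening_mono H htrans d b v v' k k', opening_mono H htrans d b v' v k' k⟩
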